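/- arXiv:1205.1284 — 2 statements merged into one kernel-verified Lean document; each statement's English description precedes it below -/
import Mathlib

section
/- For any two i.i.d. integrable real-valued random variables X and Y, E|X+Y| - E|X-Y| = 2 ∫₀^∞ (P(X>r) - P(X<-r))² dr. -/
/-!
Pointwise, |a + b| - |a - b| = 2 ∫₀^∞ s_r(a) s_r(b) dr with s_r = 1_{(r,∞)} - 1_{(-∞,-r)},
since both sides equal 2 sign(a) sign(b) min(|a|, |b|). Integrate this against the joint law of
(X, Y), which is ν ⊗ ν for the law ν of X, and swap the integrals (Fubini applies because
|s_r(a) s_r(b)| ≤ 1_{r < |a|} and E|X| < ∞): the inner integral factors as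
(E s_r(X))² = (P(X > r) - P(X < -r))².
-/
open MeasureTheory ProbabilityTheory Set

noncomputable def signedTail (r x : ℝ) : ℝ :=
  (Ioi r).indicator 1 x - (Iio (-r)).indicator 1 x

lemma measurable_signedTail_uncurry : Measurable (Function.uncurry signedTail) := by
  unfold Function.uncurry signedTail
  refine Measurable.sub ?_ ?_ <;> refine Measurable.indicator measurable_const ?_
  · exact measurableSet_lt measurable_fst measurable_snd
  · exact measurableSet_lt measurable_snd measurable_fst.neg

lemma integral_signedTail (ν : Measure ℝ) [IsFiniteMeasure ν] (r : ℝ) :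
    ∫ x, signedTail r x ∂ν = ν.real (Ioi r) - ν.real (Iio (-r)) := by
  unfold signedTail
  rw [integral_sub ((integrable_const 1).indicator measurableSet_Ioi)
      ((integrable_const 1).indicator measurableSet_Iio),
    integral_indicator_one measurableSet_Ioi, integral_indicator_one measurableSet_Iio]

lemma signedTail_eq_sign_mul_indicator {r : ℝ} (hr : 0 < r) (x : ℝ) :
    signedTail r x = Real.sign x * (Iio |x|).indicator 1 r := by
  rcases lt_trichotomy x 0 with hx | rfl | hx
  · rw [Real.sign_of_neg hx, abs_of_neg hx]
    simp only [signedTail, indicator, mem_Ioi, mem_Iio, Pi.one_apply, lt_neg]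
    split_ifs <;> linarith
  · simp [signedTail, indicator]
  · rw [Real.sign_of_pos hx, abs_of_pos hx]
    simp only [signedTail, indicator, mem_Ioi, mem_Iio, Pi.one_apply]
    split_ifs <;> linarith

lemma signedTail_mul_signedTail {r : ℝ} (hr : 0 < r) (a b : ℝ) :
    signedTail r a * signedTail r b
      = Real.sign a * Real.sign b * (Iio (min |a| |b|)).indicator 1 r := by
  rw [signedTail_eq_sign_mul_indicator hr, signedTail_eq_sign_mul_indicator hr, ← Iio_inter_Iio,
    inter_indicator_one, Pi.mul_apply]
  ring

lemma abs_signedTail_mul_le (r a b : ℝ) :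
    |signedTail r a * signedTail r b| ≤ (Iio |a|).indicator 1 r := by
  simp only [signedTail, indicator, mem_Ioi, mem_Iio, Pi.one_apply, lt_abs]
  split_ifs <;> norm_num at * <;> linarith

lemma setIntegral_Ioi_zero_indicator_Iio {c : ℝ} (hc : 0 ≤ c) :
    ∫ r in Ioi 0, (Iio c).indicator (1 : ℝ → ℝ) r = c := by
  rw [integral_indicator_one measurableSet_Iio, measureReal_restrict_apply measurableSet_Iio,
    Iio_inter_Ioi, Real.volume_real_Ioo]
  simp [hc]

lemma integrableOn_Ioi_zero_indicator_Iio (c : ℝ) :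
    IntegrableOn ((Iio c).indicator (1 : ℝ → ℝ)) (Ioi 0) := by
  rw [IntegrableOn, integrable_indicator_iff measurableSet_Iio]
  refine integrableOn_const ?_
  rw [Measure.restrict_apply measurableSet_Iio, Iio_inter_Ioi]
  exact measure_Ioo_lt_top.ne

lemma abs_add_sub_abs_sub_eq_sign_mul_min (a b : ℝ) :
    |a + b| - |a - b| = 2 * (Real.sign a * Real.sign b * min |a| |b|) := by
  rcases lt_trichotomy a 0 with ha | rfl | ha <;> rcases lt_trichotomy b 0 with hb | rfl | hb <;>
    simp [Real.sign_of_neg, Real.sign_of_pos, abs_of_neg, abs_of_pos, min_def, *] <;>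
    split_ifs <;> cases abs_cases (a + b) <;> cases abs_cases (a - b) <;> linarith

lemma abs_add_sub_abs_sub_eq_setIntegral_signedTail_mul (a b : ℝ) :
    |a + b| - |a - b| = 2 * ∫ r in Ioi 0, signedTail r a * signedTail r b := by
  rw [setIntegral_congr_fun measurableSet_Ioi fun r hr => signedTail_mul_signedTail hr a b,
    integral_const_mul, setIntegral_Ioi_zero_indicator_Iio (le_min (abs_nonneg a) (abs_nonneg b)),
    abs_add_sub_abs_sub_eq_sign_mul_min]

lemma integrable_signedTail_mul_prod {ν₁ ν₂ : Measure ℝ} [IsFiniteMeasure ν₁]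
    [IsFiniteMeasure ν₂] (h₁ : Integrable id ν₁) :
    Integrable (Function.uncurry fun (p : ℝ × ℝ) r => signedTail r p.1 * signedTail r p.2)
      ((ν₁.prod ν₂).prod (volume.restrict (Ioi 0))) := by
  have hmeas :
      Measurable (Function.uncurry fun (p : ℝ × ℝ) r => signedTail r p.1 * signedTail r p.2) :=
    (measurable_signedTail_uncurry.comp (measurable_snd.prodMk measurable_fst.fst)).mul
      (measurable_signedTail_uncurry.comp (measurable_snd.prodMk measurable_fst.snd))
  have hbound : ∀ (p : ℝ × ℝ) r,
      ‖signedTail r p.1 * signedTail r p.2‖ ≤ (Iio |p.1|).indicator 1 r :=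
    fun p r => abs_signedTail_mul_le r p.1 p.2
  refine (integrable_prod_iff hmeas.aestronglyMeasurable).mpr ⟨?_, ?_⟩
  · refine Filter.Eventually.of_forall fun p => ?_
    exact (integrableOn_Ioi_zero_indicator_Iio |p.1|).mono'
      (hmeas.comp measurable_prodMk_left).aestronglyMeasurable
      (Filter.Eventually.of_forall (hbound p))
  · refine (h₁.abs.comp_fst ν₂).mono' hmeas.aestronglyMeasurable.norm.integral_prod_right'
      (Filter.Eventually.of_forall fun p => ?_)
    rw [Real.norm_of_nonneg (integral_nonneg fun r => norm_nonneg _)]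
    calc ∫ r in Ioi 0, ‖signedTail r p.1 * signedTail r p.2‖
        ≤ ∫ r in Ioi 0, (Iio |p.1|).indicator 1 r :=
          integral_mono_of_nonneg (Filter.Eventually.of_forall fun r => norm_nonneg _)
            (integrableOn_Ioi_zero_indicator_Iio |p.1|) (Filter.Eventually.of_forall (hbound p))
      _ = |p.1| := setIntegral_Ioi_zero_indicator_Iio (abs_nonneg _)

theorem integral_abs_add_sub_abs_sub_prod {ν₁ ν₂ : Measure ℝ} [IsFiniteMeasure ν₁]
    [IsFiniteMeasure ν₂] (h₁ : Integrable id ν₁) :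
    ∫ p, (|p.1 + p.2| - |p.1 - p.2|) ∂(ν₁.prod ν₂)
      = 2 * ∫ r in Ioi 0, (ν₁.real (Ioi r) - ν₁.real (Iio (-r)))
          * (ν₂.real (Ioi r) - ν₂.real (Iio (-r))) := by
  simp_rw [abs_add_sub_abs_sub_eq_setIntegral_signedTail_mul, integral_const_mul,
    integral_integral_swap (integrable_signedTail_mul_prod h₁), integral_prod_mul,
    integral_signedTail]

theorem exp_abs_sum_sub_exp_abs_diff_eq
    {Ω : Type*} [MeasurableSpace Ω] {μ : Measure Ω} [IsProbabilityMeasure μ]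
    (X Y : Ω → ℝ) (hindep : IndepFun X Y μ) (hid : IdentDistrib X Y μ μ)
    (hint : Integrable X μ) :
    (∫ ω, |X ω + Y ω| ∂μ) - ∫ ω, |X ω - Y ω| ∂μ
      = 2 * ∫ r in Set.Ioi (0 : ℝ),
          ((μ {ω | X ω > r}).toReal - (μ {ω | X ω < -r}).toReal) ^ 2 := by
  have hX : AEMeasurable X μ := hint.aemeasurable
  have hY : AEMeasurable Y μ := hid.aemeasurable_snd
  have hintY : Integrable Y μ := hid.integrable_iff.mp hint
  have hlaw : μ.map (fun ω => (X ω, Y ω)) = (μ.map X).prod (μ.map X) := by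
    rw [(indepFun_iff_map_prod_eq_prod_map_map hX hY).mp hindep, hid.map_eq]
  have hintLaw : Integrable id (μ.map X) :=
    (integrable_map_measure aestronglyMeasurable_id hX).mpr hint
  calc (∫ ω, |X ω + Y ω| ∂μ) - ∫ ω, |X ω - Y ω| ∂μ
      = ∫ p, (|p.1 + p.2| - |p.1 - p.2|) ∂(μ.map fun ω => (X ω, Y ω)) := by
        rw [integral_map (hX.prodMk hY) (by fun_prop)]
        exact (integral_sub (hint.add hintY).abs (hint.sub hintY).abs).symm
    _ = _ := by
        simp_rw [hlaw, integral_abs_add_sub_abs_sub_prod hintLaw, ← sq,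
          map_measureReal_apply_of_aemeasurable hX measurableSet_Ioi,
          map_measureReal_apply_of_aemeasurable hX measurableSet_Iio]
        rfl
end

section
/- Let ψ(ξ) = ⟨Qξ,ξ⟩/2 + ∫_{ℝⁿ∖{0}} (1 - cos⟨ξ,u⟩) ν(du) with Q symmetric positive semidefinite and ν a Lévy measure. Then the kernel K(ξ,η) = ψ(ξ+η) − ψ(ξ−η) is positive definite: for any finite set S ⊂ ℝⁿ and complex numbers (λ_ξ)_{ξ∈S}, ∑_{ξ,η∈S} K(ξ,η) λ_ξ conj(λ_η) ≥ 0. -/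
open MeasureTheory
open scoped ENNReal RealInnerProductSpace Matrix ComplexConjugate

/-!
Splitting `ψ = q/2 + g`, the quadratic part gives `q(ξ+η) - q(ξ-η) = 4⟨Qξ,η⟩` and the Lévy part
gives `g(ξ+η) - g(ξ-η) = 2 ∫ sin⟨ξ,u⟩ sin⟨η,u⟩ ν(du)`, since
`cos(a-b) - cos(a+b) = 2 sin a sin b`. Both are Gram kernels, `⟨Qξ,η⟩` because `Q ⪰ 0` and the
integrand because it is a product `f(ξ) f(η)`, so `K` is a positive semidefinite real kernel.
Its Hermitian form splits into the real quadratic forms in `Re λ` and `Im λ`. The Lévy condition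
makes `1 - cos⟨ξ,·⟩ ≤ (‖ξ‖²/2 + 2) min(‖u‖², 1)` integrable, so all integrals are genuine.
-/

def IsPosSemidefKernel {ι : Type*} (k : ι → ι → ℝ) : Prop :=
  ∀ (S : Finset ι) (c : ι → ℝ), 0 ≤ ∑ i ∈ S, ∑ j ∈ S, k i j * c i * c j

namespace IsPosSemidefKernel

variable {ι : Type*} {k l : ι → ι → ℝ}

theorem add (hk : IsPosSemidefKernel k) (hl : IsPosSemidefKernel l) :
    IsPosSemidefKernel fun i j => k i j + l i j := fun S c => by
  simpa only [add_mul, Finset.sum_add_distrib] using add_nonneg (hk S c) (hl S c)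

theorem const_mul (hk : IsPosSemidefKernel k) {a : ℝ} (ha : 0 ≤ a) :
    IsPosSemidefKernel fun i j => a * k i j := fun S c => by
  simpa only [mul_assoc, ← Finset.mul_sum] using mul_nonneg ha (hk S c)

theorem of_mul_self (f : ι → ℝ) : IsPosSemidefKernel fun i j => f i * f j := fun S c => by
  have h : ∑ i ∈ S, ∑ j ∈ S, f i * f j * c i * c j = (∑ i ∈ S, f i * c i) ^ 2 := by
    rw [sq, Finset.sum_mul_sum]
    exact Finset.sum_congr rfl fun i _ => Finset.sum_congr rfl fun j _ => by ring
  exact h ▸ sq_nonneg _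

theorem integral {α : Type*} [MeasurableSpace α] {μ : Measure α} {F : ι → ι → α → ℝ}
    (hF : ∀ i j, Integrable (F i j) μ) (hpos : ∀ u, IsPosSemidefKernel fun i j => F i j u) :
    IsPosSemidefKernel fun i j => ∫ u, F i j u ∂μ := fun S c => by
  have h : ∑ i ∈ S, ∑ j ∈ S, (∫ u, F i j u ∂μ) * c i * c j
      = ∫ u, ∑ i ∈ S, ∑ j ∈ S, F i j u * c i * c j ∂μ := by
    rw [integral_finsetSum _ fun i _ => integrable_finsetSum _ fun j _ =>
      ((hF i j).mul_const _).mul_const _]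
    refine Finset.sum_congr rfl fun i _ => ?_
    rw [integral_finsetSum _ fun j _ => ((hF i j).mul_const _).mul_const _]
    simp only [integral_mul_const]
  exact h ▸ integral_nonneg fun u => hpos u S c

theorem re_sum_mul_conj_nonneg (hk : IsPosSemidefKernel k) (S : Finset ι) (lam : ι → ℂ) :
    0 ≤ (∑ i ∈ S, ∑ j ∈ S, (k i j : ℂ) * lam i * conj (lam j)).re := by
  have h : (∑ i ∈ S, ∑ j ∈ S, (k i j : ℂ) * lam i * conj (lam j)).re
      = ∑ i ∈ S, ∑ j ∈ S, k i j * (lam i).re * (lam j).re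
        + ∑ i ∈ S, ∑ j ∈ S, k i j * (lam i).im * (lam j).im := by
    simp only [Complex.re_sum, ← Finset.sum_add_distrib]
    refine Finset.sum_congr rfl fun i _ => Finset.sum_congr rfl fun j _ => ?_
    simp [Complex.mul_re]
  exact h ▸ add_nonneg (hk S _) (hk S _)

end IsPosSemidefKernel

theorem Matrix.PosSemidef.isPosSemidefKernel_mulVec_dotProduct {m ι : Type*} [Fintype m]
    {Q : Matrix m m ℝ} (hQ : Q.PosSemidef) (x : ι → m → ℝ) :
    IsPosSemidefKernel fun i j => Q *ᵥ x i ⬝ᵥ x j := fun S c => by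
  have h : ∑ i ∈ S, ∑ j ∈ S, (Q *ᵥ x i ⬝ᵥ x j) * c i * c j
      = Q *ᵥ (∑ i ∈ S, c i • x i) ⬝ᵥ ∑ j ∈ S, c j • x j := by
    simp only [Matrix.mulVec_sum, Matrix.mulVec_smul, dotProduct_sum, sum_dotProduct,
      dotProduct_smul, smul_dotProduct, smul_eq_mul, Finset.mul_sum]
    rw [Finset.sum_comm]
    exact Finset.sum_congr rfl fun i _ => Finset.sum_congr rfl fun j _ => by ring
  rw [h, dotProduct_comm]
  exact hQ.dotProduct_mulVec_nonneg _

theorem Matrix.IsSymm.mulVec_add_dotProduct_add_sub_mulVec_sub_dotProduct_sub {m : Type*} [Fintype m] {Q : Matrix m m ℝ}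
    (hQ : Q.IsSymm) (a b : m → ℝ) :
    Q *ᵥ (a + b) ⬝ᵥ (a + b) - Q *ᵥ (a - b) ⬝ᵥ (a - b) = 4 * (Q *ᵥ a ⬝ᵥ b) := by
  have hba : Q *ᵥ b ⬝ᵥ a = Q *ᵥ a ⬝ᵥ b := by
    rw [dotProduct_comm, Matrix.dotProduct_mulVec, ← Matrix.mulVec_transpose, hQ.eq]
  simp only [Matrix.mulVec_add, Matrix.mulVec_sub, add_dotProduct, sub_dotProduct,
    dotProduct_add, dotProduct_sub, hba]
  ring

theorem one_sub_cos_le_mul_min_sq_norm_one {E : Type*} [NormedAddCommGroup E]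
    [InnerProductSpace ℝ E] (ξ u : E) :
    1 - Real.cos ⟪ξ, u⟫ ≤ (‖ξ‖ ^ 2 / 2 + 2) * min (‖u‖ ^ 2) 1 := by
  rcases le_total (‖u‖ ^ 2) 1 with h | h
  · have hcos := Real.one_sub_sq_div_two_le_cos (x := ⟪ξ, u⟫)
    have hinner : ⟪ξ, u⟫ ^ 2 ≤ (‖ξ‖ * ‖u‖) ^ 2 :=
      sq_le_sq.mpr ((abs_real_inner_le_norm ξ u).trans (le_abs_self _))
    rw [min_eq_left h]
    nlinarith [sq_nonneg ‖u‖, sq_nonneg ‖ξ‖]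
  · rw [min_eq_right h]
    nlinarith [Real.neg_one_le_cos ⟪ξ, u⟫, sq_nonneg ‖ξ‖]

theorem integrable_one_sub_cos_inner {E : Type*} [NormedAddCommGroup E] [InnerProductSpace ℝ E]
    [MeasurableSpace E] [OpensMeasurableSpace E] {ν : Measure E}
    (hν : ∫⁻ u, ENNReal.ofReal (min (‖u‖ ^ 2) 1) ∂ν < ∞) (ξ : E) :
    Integrable (fun u => 1 - Real.cos ⟪ξ, u⟫) ν := by
  have hmin : Integrable (fun u : E => min (‖u‖ ^ 2) 1) ν := by
    refine ⟨by fun_prop, ?_⟩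
    rw [hasFiniteIntegral_iff_ofReal (.of_forall fun u => by positivity)]
    exact hν
  refine (hmin.const_mul (‖ξ‖ ^ 2 / 2 + 2)).mono (by fun_prop) (.of_forall fun u => ?_)
  rw [Real.norm_of_nonneg (by linarith [Real.cos_le_one ⟪ξ, u⟫]),
    Real.norm_of_nonneg (by positivity)]
  exact one_sub_cos_le_mul_min_sq_norm_one ξ u

theorem isPosSemidefKernel_integral_one_sub_cos_add_sub {E : Type*} [NormedAddCommGroup E]
    [InnerProductSpace ℝ E] [MeasurableSpace E] {ν : Measure E}
    (hν : ∀ ξ, Integrable (fun u => 1 - Real.cos ⟪ξ, u⟫) ν) :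
    IsPosSemidefKernel fun ξ η : E =>
      ∫ u, (1 - Real.cos ⟪ξ + η, u⟫) ∂ν - ∫ u, (1 - Real.cos ⟪ξ - η, u⟫) ∂ν := by
  have h : ∀ ξ η : E, (fun u => (1 - Real.cos ⟪ξ + η, u⟫) - (1 - Real.cos ⟪ξ - η, u⟫))
      = fun u => 2 * (Real.sin ⟪ξ, u⟫ * Real.sin ⟪η, u⟫) := fun ξ η => by
    funext u
    rw [inner_add_left, inner_sub_left, Real.cos_add, Real.cos_sub]
    ring
  have hsin := IsPosSemidefKernel.integral (μ := ν) (fun ξ η => h ξ η ▸ (hν _).sub (hν _))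
    fun u => (IsPosSemidefKernel.of_mul_self fun ξ : E => Real.sin ⟪ξ, u⟫).const_mul two_pos.le
  simpa only [← h, integral_sub (hν _) (hν _)] using hsin

theorem kernel_pos_def_general
    (n : ℕ) (Q : Matrix (Fin n) (Fin n) ℝ) (hQpsd : Q.PosSemidef)
    (ν : Measure (EuclideanSpace ℝ (Fin n)))
    (hν : ∫⁻ u, ENNReal.ofReal (min (‖u‖ ^ 2) 1) ∂ν < ∞)
    (ψ : EuclideanSpace ℝ (Fin n) → ℝ)
    (hψ : ∀ ξ, ψ ξ = (Q.mulVec ξ ⬝ᵥ ξ) / 2 + ∫ u, (1 - Real.cos ⟪ξ, u⟫) ∂ν)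
    (K : EuclideanSpace ℝ (Fin n) → EuclideanSpace ℝ (Fin n) → ℝ)
    (hK : ∀ ξ η, K ξ η = ψ (ξ + η) - ψ (ξ - η))
    (S : Finset (EuclideanSpace ℝ (Fin n)))
    (lam : EuclideanSpace ℝ (Fin n) → ℂ) :
    0 ≤ (∑ ξ ∈ S, ∑ η ∈ S, (K ξ η : ℂ) * lam ξ * conj (lam η)).re := by
  have hQ : IsPosSemidefKernel fun ξ η : EuclideanSpace ℝ (Fin n) => 2 * (Q *ᵥ ξ ⬝ᵥ η) :=
    (hQpsd.isPosSemidefKernel_mulVec_dotProduct WithLp.ofLp).const_mul two_pos.le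
  have hLevy := isPosSemidefKernel_integral_one_sub_cos_add_sub
    (integrable_one_sub_cos_inner hν)
  have hKpos : IsPosSemidefKernel K := by
    convert hQ.add hLevy using 3 with ξ η
    have hpolar := (Matrix.isHermitian_iff_isSymm.mp hQpsd.isHermitian)
      |>.mulVec_add_dotProduct_add_sub_mulVec_sub_dotProduct_sub ξ η
    rw [hK, hψ, hψ, WithLp.ofLp_add, WithLp.ofLp_sub]
    linarith
  exact hKpos.re_sum_mul_conj_nonneg S lam

theorem kernel_pos_def
    (n : ℕ) (Q : Matrix (Fin n) (Fin n) ℝ) (hQsymm : Q.IsSymm) (hQpsd : Q.PosSemidef)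
    (ν : Measure (EuclideanSpace ℝ (Fin n)))
    (hν0 : ν {0} = 0)
    (hν : ∫⁻ u, ENNReal.ofReal (min (‖u‖ ^ 2) 1) ∂ν < ∞)
    (ψ : EuclideanSpace ℝ (Fin n) → ℝ)
    (hψ : ∀ ξ, ψ ξ = (Q.mulVec ξ ⬝ᵥ ξ) / 2 + ∫ u, (1 - Real.cos ⟪ξ, u⟫) ∂ν)
    (K : EuclideanSpace ℝ (Fin n) → EuclideanSpace ℝ (Fin n) → ℝ)
    (hK : ∀ ξ η, K ξ η = ψ (ξ + η) - ψ (ξ - η))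
    (S : Finset (EuclideanSpace ℝ (Fin n)))
    (lam : EuclideanSpace ℝ (Fin n) → ℂ) :
    0 ≤ (∑ ξ ∈ S, ∑ η ∈ S, (K ξ η : ℂ) * lam ξ * conj (lam η)).re :=
  kernel_pos_def_general n Q hQpsd ν hν ψ hψ K hK S lam
end
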